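/- Under the hypotheses that E[N₂ | X + N₁] = 0 a.s. and all second moments are finite, the set of measurable functions f : ℝ^n → ℝ^n minimizing the population risk E[‖f(X+N₁) - (X+N₂)‖²] coincides with the set minimizing E[‖f(X+N₁) - X‖²], over any fixed family F of measurable functions. -/

import Mathlib

open MeasureTheory RealInnerProductSpace

/-!
Expanding the square,
`‖f(X + N₁) - (X + N₂)‖² = ‖f(X + N₁) - X‖² + ‖N₂‖² + 2⟪N₂, X⟫ - 2⟪N₂, f(X + N₁)⟫`.
Since `f(X + N₁)` is `σ(X + N₁)`-measurable, pulling it out of the conditional expectation gives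
`E⟪N₂, f(X + N₁)⟫ = E⟪E[N₂ | X + N₁], f(X + N₁)⟫ = 0`. Hence the two risks differ by the constant
`E‖N₂‖² + 2 E⟪N₂, X⟫`, which does not depend on `f`, and so they have the same minimizers on `F`.
-/

theorem setOf_forall_le_eq_of_eq_add_const {α β : Type*} [Add β] [LE β] [AddRightMono β]
    [AddRightReflectLE β] {s : Set α} {R R' : α → β} (c : β) (h : ∀ a ∈ s, R a = R' a + c) :
    {a ∈ s | ∀ b ∈ s, R a ≤ R b} = {a ∈ s | ∀ b ∈ s, R' a ≤ R' b} := by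
  ext a
  refine and_congr_right fun ha => forall₂_congr fun b hb => ?_
  rw [h a ha, h b hb, add_le_add_iff_right]

section

variable {Ω E : Type*} {m mΩ : MeasurableSpace Ω} {μ : Measure Ω}
  [NormedAddCommGroup E] [InnerProductSpace ℝ E]

theorem MeasureTheory.MemLp.integrable_inner {f g : Ω → E} (hf : MemLp f 2 μ) (hg : MemLp g 2 μ) :
    Integrable (fun ω => ⟪f ω, g ω⟫) μ :=
  (L2.integrable_inner (𝕜 := ℝ) hf.toLp hg.toLp).congr <| by
    filter_upwards [hf.coeFn_toLp, hg.coeFn_toLp] with ω hfω hgω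
    rw [hfω, hgω]

theorem integral_inner_eq_zero_of_condExp_eq_zero [CompleteSpace E] (hm : m ≤ mΩ)
    [SigmaFinite (μ.trim hm)] {N Z : Ω → E} (hZ : AEStronglyMeasurable[m] Z μ)
    (hNZ : Integrable (fun ω => ⟪N ω, Z ω⟫) μ) (hN : Integrable N μ) (hcond : μ[N | m] =ᵐ[μ] 0) :
    ∫ ω, ⟪N ω, Z ω⟫ ∂μ = 0 := by
  have hpull : μ[fun ω => ⟪N ω, Z ω⟫ | m] =ᵐ[μ] fun ω => ⟪μ[N | m] ω, Z ω⟫ :=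
    condExp_bilin_of_aestronglyMeasurable_right (innerSL ℝ) hZ hNZ hN
  rw [← integral_condExp hm, integral_congr_ae hpull]
  refine integral_eq_zero_of_ae ?_
  filter_upwards [hcond] with ω hω
  simp [hω]

theorem integral_norm_sub_add_sq {Z X N : Ω → E}
    (hZX : Integrable (fun ω => ‖Z ω - X ω‖ ^ 2) μ) (hN : Integrable (fun ω => ‖N ω‖ ^ 2) μ)
    (hNX : Integrable (fun ω => ⟪N ω, X ω⟫) μ) (hNZ : Integrable (fun ω => ⟪N ω, Z ω⟫) μ) :
    ∫ ω, ‖Z ω - (X ω + N ω)‖ ^ 2 ∂μ =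
      ∫ ω, ‖Z ω - X ω‖ ^ 2 ∂μ + (∫ ω, ‖N ω‖ ^ 2 ∂μ + 2 * ∫ ω, ⟪N ω, X ω⟫ ∂μ)
        - 2 * ∫ ω, ⟪N ω, Z ω⟫ ∂μ := by
  have hpt : ∀ ω, ‖Z ω - (X ω + N ω)‖ ^ 2 =
      ‖Z ω - X ω‖ ^ 2 + (‖N ω‖ ^ 2 + 2 * ⟪N ω, X ω⟫) - 2 * ⟪N ω, Z ω⟫ := fun ω => by
    rw [show Z ω - (X ω + N ω) = (Z ω - X ω) - N ω by abel, norm_sub_sq_real, inner_sub_left,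
      real_inner_comm (Z ω), real_inner_comm (X ω)]
    ring
  have hconst : Integrable (fun ω => ‖N ω‖ ^ 2 + 2 * ⟪N ω, X ω⟫) μ := hN.add (hNX.const_mul 2)
  have hsum : Integrable (fun ω => ‖Z ω - X ω‖ ^ 2 + (‖N ω‖ ^ 2 + 2 * ⟪N ω, X ω⟫)) μ :=
    hZX.add hconst
  simp_rw [hpt]
  rw [integral_sub hsum (hNZ.const_mul 2), integral_add hZX hconst,
    integral_add hN (hNX.const_mul 2), integral_const_mul, integral_const_mul]

end

theorem stmt_5 (n : ℕ) {Ω : Type*} [MeasurableSpace Ω]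
    (μ : Measure Ω) [IsProbabilityMeasure μ]
    (X N₁ N₂ : Ω → EuclideanSpace ℝ (Fin n))
    (hX : Measurable X) (hN₁ : Measurable N₁) (hN₂ : Measurable N₂)
    (hcond : μ[N₂ | MeasurableSpace.comap (fun ω => X ω + N₁ ω) inferInstance] =ᵐ[μ] 0)
    (hXsq : Integrable (fun ω => ‖X ω‖ ^ 2) μ)
    (hN₂sq : Integrable (fun ω => ‖N₂ ω‖ ^ 2) μ)
    (F : Set (EuclideanSpace ℝ (Fin n) → EuclideanSpace ℝ (Fin n)))
    (hF : ∀ f ∈ F, Measurable f)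
    (hFsq : ∀ f ∈ F, Integrable (fun ω => ‖f (X ω + N₁ ω)‖ ^ 2) μ)
    (hFcross : ∀ f ∈ F, Integrable (fun ω => ⟪N₂ ω, f (X ω + N₁ ω)⟫) μ) :
    {f ∈ F | ∀ g ∈ F,
        ∫ ω, ‖f (X ω + N₁ ω) - (X ω + N₂ ω)‖ ^ 2 ∂μ ≤
          ∫ ω, ‖g (X ω + N₁ ω) - (X ω + N₂ ω)‖ ^ 2 ∂μ} =
    {f ∈ F | ∀ g ∈ F,
        ∫ ω, ‖f (X ω + N₁ ω) - X ω‖ ^ 2 ∂μ ≤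
          ∫ ω, ‖g (X ω + N₁ ω) - X ω‖ ^ 2 ∂μ} := by
  have hm := (hX.add hN₁).comap_le
  have hXL : MemLp X 2 μ := (memLp_two_iff_integrable_sq_norm hX.aestronglyMeasurable).2 hXsq
  have hN₂L : MemLp N₂ 2 μ := (memLp_two_iff_integrable_sq_norm hN₂.aestronglyMeasurable).2 hN₂sq
  have hfL (f) (hf : f ∈ F) : MemLp (fun ω => f (X ω + N₁ ω)) 2 μ :=
    (memLp_two_iff_integrable_sq_norm
      ((hF f hf).comp (hX.add hN₁)).aestronglyMeasurable).2 (hFsq f hf)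
  have hcross (f) (hf : f ∈ F) : ∫ ω, ⟪N₂ ω, f (X ω + N₁ ω)⟫ ∂μ = 0 :=
    integral_inner_eq_zero_of_condExp_eq_zero hm
      ((hF f hf).comp (comap_measurable _)).aestronglyMeasurable (hFcross f hf)
      (hN₂L.integrable one_le_two) hcond
  refine setOf_forall_le_eq_of_eq_add_const
    (∫ ω, ‖N₂ ω‖ ^ 2 ∂μ + 2 * ∫ ω, ⟪N₂ ω, X ω⟫ ∂μ) fun f hf => ?_
  rw [integral_norm_sub_add_sq ((memLp_two_iff_integrable_sq_norm
      ((hfL f hf).sub hXL).aestronglyMeasurable).1 ((hfL f hf).sub hXL)) hN₂sq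
    (hN₂L.integrable_inner hXL) (hFcross f hf), hcross f hf, mul_zero, sub_zero]
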